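/- arXiv:2306.07258 — 3 statements merged into one kernel-verified Lean document; each statement's English description precedes it below -/
import Mathlib

section
/- Let U ⊆ ℝⁿ be open, m < n, and A : U → Matrix n m ℝ. If h : U → ℝⁿ is a C¹ map with invertible Jacobian J_h(q) for all q ∈ U such that the transformed generalized force satisfies (J_h(q)ᵀ)⁻¹ A(q) u = (u, 0_{n−m}) for every q ∈ U and every u ∈ ℝᵐ, then, writing h = (h_a, h_u) with h_a : U → ℝᵐ, the Jacobian of h_a satisfies J_{h_a}(q) = A(q)ᵀ for every q ∈ U; i.e., the passive output ẏ = A(q)ᵀq̇ is integrable with potential g = h_a. (Necessity part of Theorem 2, underactuated case.) -/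
open Matrix

/-- Jacobian matrix of a map between finite-dimensional coordinate spaces. -/
noncomputable def jac {ι κ : Type*} [Fintype ι] [DecidableEq ι] [Fintype κ]
    (g : (ι → ℝ) → (κ → ℝ)) (q : ι → ℝ) : Matrix κ ι ℝ :=
  Matrix.of fun i j => fderiv ℝ g q (Pi.single j 1) i

/-!
Undoing the inverse, the decoupling condition says `A(q) u = J_h(q)ᵀ (u, 0)` for every `u`, so
`A(q)` is the first `m` columns of `J_h(q)ᵀ`, i.e. `A(q)ᵀ` is the first `m` rows of `J_h(q)`,
which are the Jacobian of `h_a`. The row computation needs `h` differentiable at `q`; this holds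
because `fderiv` is `0` at points of non-differentiability, and an invertible Jacobian is nonzero.
-/

namespace Matrix

variable {ι κ R : Type*} [Fintype ι] [Fintype κ] [CommRing R]

theorem mulVec_sumElim_zero (M : Matrix (ι ⊕ κ) (ι ⊕ κ) R) (u : ι → R) :
    M *ᵥ Sum.elim u 0 = M.toCols₁ *ᵥ u := by
  conv_lhs => rw [← fromCols_toCols M]
  rw [fromCols_mulVec_sumElim, mulVec_zero, add_zero]

theorem eq_toCols₁_of_inv_mulVec_eq_sumElim [DecidableEq ι] [DecidableEq κ]
    {M : Matrix (ι ⊕ κ) (ι ⊕ κ) R} (hM : IsUnit M) {A : Matrix (ι ⊕ κ) ι R}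
    (h : ∀ u, M⁻¹ *ᵥ (A *ᵥ u) = Sum.elim u 0) : A = M.toCols₁ := by
  have hdet : IsUnit M.det := (isUnit_iff_isUnit_det M).mp hM
  refine ext_iff_mulVec.mpr fun u => ?_
  calc A *ᵥ u = M *ᵥ (M⁻¹ *ᵥ (A *ᵥ u)) := by
        rw [mulVec_mulVec, mul_nonsing_inv M hdet, one_mulVec]
    _ = M.toCols₁ *ᵥ u := by rw [h u, mulVec_sumElim_zero]

end Matrix

section Jacobian

variable {ι κ : Type*} [Fintype ι] [DecidableEq ι] [Fintype κ]

theorem differentiableAt_of_isUnit_jac [Nonempty ι] {g : (ι → ℝ) → (ι → ℝ)} {q : ι → ℝ}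
    (hg : IsUnit (jac g q)) : DifferentiableAt ℝ g q := by
  by_contra hdiff
  have hzero : jac g q = 0 := by
    ext i j
    simp [jac, fderiv_zero_of_not_differentiableAt hdiff]
  exact not_isUnit_zero (hzero ▸ hg)

theorem jac_comp_eq_submatrix {g : (ι → ℝ) → (κ → ℝ)} {q : ι → ℝ}
    (hg : DifferentiableAt ℝ g q) {ν : Type*} [Fintype ν] (σ : ν → κ) :
    jac (fun x i => g x (σ i)) q = (jac g q).submatrix σ id := by
  ext i j
  rw [jac, of_apply, fderiv_pi fun i => differentiableAt_pi.mp hg (σ i),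
    ContinuousLinearMap.pi_apply, fderiv_apply hg]
  rfl

theorem jac_comp_eq_submatrix_of_isUnit {g : (ι → ℝ) → (ι → ℝ)} {q : ι → ℝ}
    (hg : IsUnit (jac g q)) {ν : Type*} [Fintype ν] (σ : ν → ι) :
    jac (fun x i => g x (σ i)) q = (jac g q).submatrix σ id := by
  cases isEmpty_or_nonempty ν with
  | inl _ => exact Subsingleton.elim _ _
  | inr hν =>
    have : Nonempty ι := hν.map σ
    exact jac_comp_eq_submatrix (differentiableAt_of_isUnit_jac hg) σ

end Jacobian

theorem underactuated_input_decoupling_necessity_general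
    {m k : ℕ}
    {U : Set ((Fin m ⊕ Fin k) → ℝ)}
    (A : ((Fin m ⊕ Fin k) → ℝ) → Matrix (Fin m ⊕ Fin k) (Fin m) ℝ)
    (h : ((Fin m ⊕ Fin k) → ℝ) → ((Fin m ⊕ Fin k) → ℝ))
    (hJinv : ∀ q ∈ U, IsUnit (jac h q))
    (hdec : ∀ q ∈ U, ∀ u : Fin m → ℝ,
      ((jac h q)ᵀ)⁻¹.mulVec ((A q).mulVec u) = Sum.elim u 0) :
    ∀ q ∈ U, jac (fun x => (fun i : Fin m => h x (Sum.inl i))) q = (A q)ᵀ := by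
  intro q hq
  have hA : A q = (jac h q)ᵀ.toCols₁ :=
    eq_toCols₁_of_inv_mulVec_eq_sumElim ((isUnit_transpose _).mpr (hJinv q hq)) (hdec q hq)
  rw [jac_comp_eq_submatrix_of_isUnit (hJinv q hq) Sum.inl, hA]
  rfl

/-- **Necessity part of Theorem 2 (underactuated case `m < n`, `n = m + k`).**
If a C¹ change of coordinates `θ = h(q)` with invertible Jacobian transforms
the generalized force `A(q)u` into `(u, 0)` for all inputs `u ∈ ℝᵐ`, then
writing `h = (h_a, h_u)`, the Jacobian of `h_a` equals `A(q)ᵀ`; i.e. the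
passive output `A(q)ᵀ q̇` is integrable with potential `g = h_a`. -/
theorem underactuated_input_decoupling_necessity
    {m k : ℕ} (hk : 0 < k)
    {U : Set ((Fin m ⊕ Fin k) → ℝ)} (hU : IsOpen U)
    (A : ((Fin m ⊕ Fin k) → ℝ) → Matrix (Fin m ⊕ Fin k) (Fin m) ℝ)
    (h : ((Fin m ⊕ Fin k) → ℝ) → ((Fin m ⊕ Fin k) → ℝ))
    (hh : ContDiffOn ℝ 1 h U)
    (hJinv : ∀ q ∈ U, IsUnit (jac h q))
    (hdec : ∀ q ∈ U, ∀ u : Fin m → ℝ,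
      ((jac h q)ᵀ)⁻¹.mulVec ((A q).mulVec u) = Sum.elim u 0) :
    ∀ q ∈ U, jac (fun x => (fun i : Fin m => h x (Sum.inl i))) q = (A q)ᵀ :=
  underactuated_input_decoupling_necessity_general A h hJinv hdec
end

section
/- Let U, V ⊆ ℝⁿ be open, h : U → V a C² diffeomorphism with Jacobian J_h, and L : ℝⁿ × ℝⁿ → ℝ a C² Lagrangian. Define the transformed Lagrangian L_θ(θ, v) = L(h⁻¹(θ), J_h(h⁻¹(θ))⁻¹ v). If a C² curve q : I → U satisfies the Euler–Lagrange equations for L with generalized force τ : I → ℝⁿ, then the curve θ(t) = h(q(t)) satisfies the Euler–Lagrange equations for L_θ with generalized force τ_θ(t) = (J_h(q(t))ᵀ)⁻¹ τ(t); i.e., the Euler–Lagrange equations are invariant under changes of generalized coordinates, with forces transforming by the inverse-transpose Jacobian. (Property 2, first part.) -/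
open Matrix

/-- Gradient of a scalar function on a finite-dimensional coordinate space. -/
noncomputable def grad {ι : Type*} [Fintype ι] [DecidableEq ι]
    (f : (ι → ℝ) → ℝ) (q : ι → ℝ) : ι → ℝ :=
  fun i => fderiv ℝ f q (Pi.single i 1)

/-- The generalized-force side `d/dt ∂L/∂v − ∂L/∂q` of the Euler–Lagrange
equations for the Lagrangian `L` along the curve `q`, at time `t`. -/
noncomputable def ELForce {ι : Type*} [Fintype ι] [DecidableEq ι]
    (L : (ι → ℝ) → (ι → ℝ) → ℝ) (q : ℝ → ι → ℝ) (t : ℝ) : ι → ℝ :=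
  deriv (fun s => grad (fun w => L (q s) w) (deriv q s)) t
    - grad (fun x => L x (deriv q t)) (q t)

/-! Write `g = h⁻¹`, so that `L_θ(θ, v) = L(g θ, Dg(θ) v)` near the curve. The momentum of `L_θ`
along `θ = h ∘ q` is `p ∘ Dg(θ)` with `p = ∂L/∂v`, whose time derivative is
`ṗ ∘ Dg(θ) + p ∘ D²g(θ)[θ̇]`, while the position derivative of `L_θ` is
`∂L/∂q ∘ Dg(θ) + p ∘ D²g(θ)[·, θ̇]`. By the symmetry of `D²g` the second-order terms cancel, so
the Euler–Lagrange covector of `L_θ` is that of `L` composed with `Dg(θ)`; in coordinates this is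
multiplication by `J_gᵀ = (J_hᵀ)⁻¹`. -/

open Filter Topology Function

section Lagrangian

variable {E F : Type*} [NormedAddCommGroup E] [NormedSpace ℝ E]
  [NormedAddCommGroup F] [NormedSpace ℝ F]

noncomputable def momentum (L : E → E → ℝ) (q : ℝ → E) (s : ℝ) : E →L[ℝ] ℝ :=
  fderiv ℝ (L (q s)) (deriv q s)

noncomputable def elForm (L : E → E → ℝ) (q : ℝ → E) (t : ℝ) : E →L[ℝ] ℝ :=
  deriv (momentum L q) t - fderiv ℝ (fun x => L x (deriv q t)) (q t)

noncomputable def pullbackLagrangian (g : F → E) (L : E → E → ℝ) : F → F → ℝ :=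
  fun y w => L (g y) (fderiv ℝ g y w)

variable {L : E → E → ℝ}

lemma DifferentiableAt.hasFDerivAt_partial_fst {x v : E}
    (hL : DifferentiableAt ℝ (uncurry L) (x, v)) :
    HasFDerivAt (fun y => L y v) ((fderiv ℝ (uncurry L) (x, v)).comp (.inl ℝ E E)) x :=
  hL.hasFDerivAt.comp (f := fun y => (y, v)) x (hasFDerivAt_prodMk_left x v)

lemma DifferentiableAt.hasFDerivAt_partial_snd {x v : E}
    (hL : DifferentiableAt ℝ (uncurry L) (x, v)) :
    HasFDerivAt (L x) ((fderiv ℝ (uncurry L) (x, v)).comp (.inr ℝ E E)) v :=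
  hL.hasFDerivAt.comp v (hasFDerivAt_prodMk_right x v)

lemma differentiableAt_momentum (hL : ContDiff ℝ 2 (uncurry L)) {q : ℝ → E} {t : ℝ}
    (hq : ContDiffAt ℝ 2 q t) : DifferentiableAt ℝ (momentum L q) t := by
  have hdL : ContDiff ℝ 1 (fderiv ℝ (uncurry L)) := hL.fderiv_right (by norm_num)
  have hmom : momentum L q
      = fun s => (fderiv ℝ (uncurry L) (q s, deriv q s)).comp (.inr ℝ E E) := by
    funext s
    exact (hL.differentiable two_ne_zero _).hasFDerivAt_partial_snd.fderiv
  have hq' : DifferentiableAt ℝ (deriv q) t :=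
    (hq.derivWithin (m := 1) (by norm_num)).differentiableAt one_ne_zero
  rw [hmom]
  exact ((hdL.differentiable one_ne_zero _).comp t
    ((hq.differentiableAt two_ne_zero).prodMk hq')).clm_comp (differentiableAt_const _)

lemma Filter.EventuallyEq.elForm_eq {q₁ q₂ : ℝ → E} {t : ℝ} (h : q₁ =ᶠ[𝓝 t] q₂) :
    elForm L q₁ t = elForm L q₂ t := by
  have hv : deriv q₁ =ᶠ[𝓝 t] deriv q₂ := h.deriv
  have hp : momentum L q₁ =ᶠ[𝓝 t] momentum L q₂ := by
    filter_upwards [h, hv] with s hs hs'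
    simp only [momentum, hs, hs']
  simp only [elForm, hp.deriv_eq, h.eq_of_nhds, hv.eq_of_nhds]

variable {g : F → E}

lemma momentum_pullbackLagrangian_eventuallyEq (hL : Differentiable ℝ (uncurry L))
    {θ : ℝ → F} {t : ℝ} (hg : ∀ᶠ s in 𝓝 t, DifferentiableAt ℝ g (θ s))
    (hθ : ∀ᶠ s in 𝓝 t, DifferentiableAt ℝ θ s) :
    momentum (pullbackLagrangian g L) θ
      =ᶠ[𝓝 t] fun s => (momentum L (g ∘ θ) s).comp (fderiv ℝ g (θ s)) := by
  filter_upwards [hg, hθ] with s hgs hθs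
  have hv : deriv (g ∘ θ) s = fderiv ℝ g (θ s) (deriv θ s) := fderiv_comp_deriv s hgs hθs
  have hpartial :=
    (hL (g (θ s), fderiv ℝ g (θ s) (deriv θ s))).hasFDerivAt_partial_snd.differentiableAt
  rw [momentum, momentum, hv]
  exact (hpartial.hasFDerivAt.comp _ (fderiv ℝ g (θ s)).hasFDerivAt).fderiv

lemma hasDerivAt_momentum_pullbackLagrangian (hL : ContDiff ℝ 2 (uncurry L)) {θ : ℝ → F}
    {t : ℝ} (hg : ContDiffAt ℝ 2 g (θ t)) (hθ : ContDiffAt ℝ 2 θ t) :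
    HasDerivAt (momentum (pullbackLagrangian g L) θ)
      ((deriv (momentum L (g ∘ θ)) t).comp (fderiv ℝ g (θ t))
        + (momentum L (g ∘ θ) t).comp (fderiv ℝ (fderiv ℝ g) (θ t) (deriv θ t))) t := by
  have hg' : ∀ᶠ s in 𝓝 t, ContDiffAt ℝ 2 g (θ s) :=
    hθ.continuousAt.eventually (hg.eventually (by simp))
  have hDg : HasDerivAt (fun s => fderiv ℝ g (θ s))
      (fderiv ℝ (fderiv ℝ g) (θ t) (deriv θ t)) t :=
    ((hg.fderiv_right (m := 1) (by norm_num)).differentiableAt one_ne_zero).hasFDerivAt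
      |>.comp_hasDerivAt t (hθ.differentiableAt two_ne_zero).hasDerivAt
  refine HasDerivAt.congr_of_eventuallyEq ?_
    (momentum_pullbackLagrangian_eventuallyEq (hL.differentiable two_ne_zero)
      (hg'.mono fun s hs => hs.differentiableAt two_ne_zero)
      ((hθ.eventually (by simp)).mono fun s hs => hs.differentiableAt two_ne_zero))
  exact (differentiableAt_momentum hL (hg.comp t hθ)).hasDerivAt.clm_comp hDg

lemma fderiv_pullbackLagrangian_left (hL : Differentiable ℝ (uncurry L)) {y w : F}
    (hg : ContDiffAt ℝ 2 g y) :
    fderiv ℝ (fun z => pullbackLagrangian g L z w) y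
      = (fderiv ℝ (fun x => L x (fderiv ℝ g y w)) (g y)).comp (fderiv ℝ g y)
        + (fderiv ℝ (L (g y)) (fderiv ℝ g y w)).comp (fderiv ℝ (fderiv ℝ g) y w) := by
  have hD2g : HasFDerivAt (fderiv ℝ g) (fderiv ℝ (fderiv ℝ g) y) y :=
    ((hg.fderiv_right (m := 1) (by norm_num)).differentiableAt one_ne_zero).hasFDerivAt
  have hcurve : HasFDerivAt (fun z => (g z, fderiv ℝ g z w))
      ((fderiv ℝ g y).prod ((fderiv ℝ (fderiv ℝ g) y).flip w)) y :=
    (hg.differentiableAt two_ne_zero).hasFDerivAt.prodMk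
      ((ContinuousLinearMap.apply ℝ E w).hasFDerivAt.comp y hD2g)
  have hsymm : (fderiv ℝ (fderiv ℝ g) y).flip w = fderiv ℝ (fderiv ℝ g) y w := by
    ext u
    exact hg.isSymmSndFDerivAt (by simp) u w
  have hcomp : HasFDerivAt (fun z => pullbackLagrangian g L z w)
      ((fderiv ℝ (uncurry L) (g y, fderiv ℝ g y w)).comp
        ((fderiv ℝ g y).prod ((fderiv ℝ (fderiv ℝ g) y).flip w))) y :=
    (hL _).hasFDerivAt.comp y hcurve
  rw [hcomp.fderiv, hsymm,
    (hL _).hasFDerivAt_partial_fst.fderiv, (hL _).hasFDerivAt_partial_snd.fderiv]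
  ext u
  simp [← map_add]

theorem elForm_pullbackLagrangian (hL : ContDiff ℝ 2 (uncurry L)) {θ : ℝ → F} {t : ℝ}
    (hg : ContDiffAt ℝ 2 g (θ t)) (hθ : ContDiffAt ℝ 2 θ t) :
    elForm (pullbackLagrangian g L) θ t = (elForm L (g ∘ θ) t).comp (fderiv ℝ g (θ t)) := by
  have hv : deriv (g ∘ θ) t = fderiv ℝ g (θ t) (deriv θ t) :=
    fderiv_comp_deriv t (hg.differentiableAt two_ne_zero) (hθ.differentiableAt two_ne_zero)
  rw [elForm, elForm, (hasDerivAt_momentum_pullbackLagrangian hL hg hθ).deriv,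
    fderiv_pullbackLagrangian_left (hL.differentiable two_ne_zero) hg, momentum, hv]
  simp only [Function.comp_apply, ContinuousLinearMap.sub_comp]
  abel

end Lagrangian

section Coordinates

variable {ι κ : Type*} [Fintype ι] [DecidableEq ι] [Fintype κ]

lemma jac_eq_toMatrix' (g : (ι → ℝ) → κ → ℝ) (x : ι → ℝ) :
    jac g x = LinearMap.toMatrix' (fderiv ℝ g x : (ι → ℝ) →ₗ[ℝ] κ → ℝ) :=
  rfl

lemma jac_mulVec (g : (ι → ℝ) → κ → ℝ) (x v : ι → ℝ) : jac g x *ᵥ v = fderiv ℝ g x v := by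
  rw [jac_eq_toMatrix', LinearMap.toMatrix'_mulVec]
  rfl

lemma inv_jac_eq_jac_of_leftInverse {g h : (ι → ℝ) → ι → ℝ} {x : ι → ℝ}
    (hg : DifferentiableAt ℝ g (h x)) (hh : DifferentiableAt ℝ h x)
    (hgh : ∀ᶠ y in 𝓝 x, g (h y) = y) : (jac h x)⁻¹ = jac g (h x) := by
  have hid : (fderiv ℝ g (h x)).comp (fderiv ℝ h x) = .id ℝ (ι → ℝ) := by
    have hgh' : g ∘ h =ᶠ[𝓝 x] id := hgh
    rw [← fderiv_comp x hg hh, hgh'.fderiv_eq, fderiv_id]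
  refine Matrix.inv_eq_left_inv ?_
  rw [jac_eq_toMatrix', jac_eq_toMatrix', ← LinearMap.toMatrix'_comp,
    ← ContinuousLinearMap.toLinearMap_comp, hid]
  exact LinearMap.toMatrix'_id

lemma inv_jac_eq_jac_invFunOn {h : (ι → ℝ) → ι → ℝ} {U V : Set (ι → ℝ)} (hU : IsOpen U)
    (hV : IsOpen V) (hbij : Set.BijOn h U V) (hh : DifferentiableOn ℝ h U)
    (hg : DifferentiableOn ℝ (invFunOn h U) V) {x : ι → ℝ} (hx : x ∈ U) :
    (jac h x)⁻¹ = jac (invFunOn h U) (h x) :=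
  inv_jac_eq_jac_of_leftInverse (hg.differentiableAt (hV.mem_nhds (hbij.mapsTo hx)))
    (hh.differentiableAt (hU.mem_nhds hx))
    (eventually_of_mem (hU.mem_nhds hx) fun _ hy => hbij.invOn_invFunOn.1 hy)

lemma transpose_mulVec_eq_apply_mulVec_single [DecidableEq κ] {R : Type*} [CommSemiring R]
    (M : Matrix κ ι R) (φ : (κ → R) →ₗ[R] R) :
    Mᵀ *ᵥ (fun i => φ (Pi.single i 1)) = fun j => φ (M *ᵥ Pi.single j 1) := by
  funext j
  rw [Matrix.mulVec_single_one]
  conv_rhs => rw [pi_eq_sum_univ' (M.col j)]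
  simp [Matrix.mulVec, dotProduct]

lemma ELForce_eq_elForm {L : (ι → ℝ) → (ι → ℝ) → ℝ} {q : ℝ → ι → ℝ} {t : ℝ}
    (hp : DifferentiableAt ℝ (momentum L q) t) :
    ELForce L q t = fun i => elForm L q t (Pi.single i 1) := by
  have hcoord : HasDerivAt (fun s i => momentum L q s (Pi.single i 1))
      (fun i => deriv (momentum L q) t (Pi.single i 1)) t :=
    hasDerivAt_pi.2 fun i => by simpa using hp.hasDerivAt.clm_apply (hasDerivAt_const t _)
  change deriv (fun s i => momentum L q s (Pi.single i 1)) t - _ = _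
  rw [hcoord.deriv]
  rfl

lemma ELForce_congr_of_eventuallyEq {L₁ L₂ : (ι → ℝ) → (ι → ℝ) → ℝ} {q : ℝ → ι → ℝ} {t : ℝ}
    (hq : ContinuousAt q t) (hL : L₁ =ᶠ[𝓝 (q t)] L₂) : ELForce L₁ q t = ELForce L₂ q t := by
  have hmom : (fun s => grad (fun w => L₁ (q s) w) (deriv q s)) =ᶠ[𝓝 t]
      fun s => grad (fun w => L₂ (q s) w) (deriv q s) := by
    filter_upwards [hq.eventually hL] with s hs
    rw [hs]
  have hpos : (fun x => L₁ x (deriv q t)) =ᶠ[𝓝 (q t)] fun x => L₂ x (deriv q t) := by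
    filter_upwards [hL] with x hx
    rw [hx]
  unfold ELForce
  rw [hmom.deriv_eq]
  unfold grad
  rw [hpos.fderiv_eq]

end Coordinates

/-- **Property 2, first part (invariance of the Euler–Lagrange equations).**
Under a C² change of coordinates `θ = h(q)` (a diffeomorphism of `U` onto
`V`, with C² inverse), solutions of the Euler–Lagrange equations for `L` with
generalized force `τ` map to solutions for the transformed Lagrangian
`L_θ(θ, v) = L(h⁻¹(θ), J_h(h⁻¹(θ))⁻¹ v)` with generalized force
`τ_θ = (J_h(q)ᵀ)⁻¹ τ`. -/
theorem euler_lagrange_invariance_under_coordinate_change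
    {n : ℕ} {U V : Set (Fin n → ℝ)} (hU : IsOpen U) (hV : IsOpen V)
    (h : (Fin n → ℝ) → (Fin n → ℝ))
    (hbij : Set.BijOn h U V)
    (hC2 : ContDiffOn ℝ 2 h U)
    (hinvC2 : ContDiffOn ℝ 2 (Function.invFunOn h U) V)
    (L : (Fin n → ℝ) → (Fin n → ℝ) → ℝ)
    (hL : ContDiff ℝ 2 (Function.uncurry L))
    (Lθ : (Fin n → ℝ) → (Fin n → ℝ) → ℝ)
    (hLθ : ∀ θ v, Lθ θ v
      = L (Function.invFunOn h U θ)
          ((jac h (Function.invFunOn h U θ))⁻¹.mulVec v))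
    (I : Set ℝ) (hI : IsOpen I)
    (q : ℝ → Fin n → ℝ) (hq : ContDiffOn ℝ 2 q I) (hqU : ∀ t ∈ I, q t ∈ U)
    (τ : ℝ → Fin n → ℝ)
    (hEL : ∀ t ∈ I, ELForce L q t = τ t) :
    ∀ t ∈ I, ELForce Lθ (fun s => h (q s)) t
      = ((jac h (q t))ᵀ)⁻¹.mulVec (τ t) := by
  intro t ht
  set g := Function.invFunOn h U
  set θ : ℝ → Fin n → ℝ := fun s => h (q s)
  have hθt : θ t ∈ V := hbij.mapsTo (hqU t ht)
  have hjac : ∀ x ∈ U, (jac h x)⁻¹ = jac g (h x) := fun x hx =>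
    inv_jac_eq_jac_invFunOn hU hV hbij (hC2.differentiableOn two_ne_zero)
      (hinvC2.differentiableOn two_ne_zero) hx
  have hqC : ContDiffAt ℝ 2 q t := hq.contDiffAt (hI.mem_nhds ht)
  have hgC : ContDiffAt ℝ 2 g (θ t) := hinvC2.contDiffAt (hV.mem_nhds hθt)
  have hθC : ContDiffAt ℝ 2 θ t := (hC2.contDiffAt (hU.mem_nhds (hqU t ht))).comp t hqC
  have hLθ_eq : Lθ =ᶠ[𝓝 (θ t)] pullbackLagrangian g L := by
    filter_upwards [hV.mem_nhds hθt] with y hy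
    funext w
    rw [hLθ, hjac _ (hbij.surjOn.mapsTo_invFunOn hy), hbij.invOn_invFunOn.2 hy, jac_mulVec]
    rfl
  have hgθ : g ∘ θ =ᶠ[𝓝 t] q := by
    filter_upwards [hI.mem_nhds ht] with s hs using hbij.invOn_invFunOn.1 (hqU s hs)
  calc ELForce Lθ θ t = ELForce (pullbackLagrangian g L) θ t :=
        ELForce_congr_of_eventuallyEq hθC.continuousAt hLθ_eq
    _ = fun j => elForm (pullbackLagrangian g L) θ t (Pi.single j 1) :=
        ELForce_eq_elForm (hasDerivAt_momentum_pullbackLagrangian hL hgC hθC).differentiableAt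
    _ = fun j => elForm L q t (jac g (θ t) *ᵥ Pi.single j 1) := by
        rw [elForm_pullbackLagrangian hL hgC hθC, hgθ.elForm_eq]
        simp only [jac_mulVec, ContinuousLinearMap.comp_apply]
    _ = (jac g (θ t))ᵀ *ᵥ ELForce L q t := by
        rw [ELForce_eq_elForm (differentiableAt_momentum hL hqC)]
        exact (transpose_mulVec_eq_apply_mulVec_single _ (elForm L q t).toLinearMap).symm
    _ = ((jac h (q t))ᵀ)⁻¹ *ᵥ τ t := by
        rw [hEL t ht, ← Matrix.transpose_nonsing_inv, hjac _ (hqU t ht)]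
end

section
/- Let d > 0 and let A(q) ∈ Matrix 6 3 ℝ be the tendon actuation matrix of the two-segment piecewise-constant-curvature soft robot, with rows: row 1 = (−d cos q₂, d(½cos q₂ − (√3/2)sin q₂), d(½cos q₂ + (√3/2)sin q₂)); row 2 = (d q₁ sin q₂, −d q₁(½sin q₂ + (√3/2)cos q₂), −d q₁(½sin q₂ − (√3/2)cos q₂)); row 3 = (1, 1, 1); rows 4–6 equal rows 1–3 with (q₁, q₂) replaced by (q₄, q₅). Then rank A(q) = 3 for every q ∈ ℝ⁶ except exactly when q₁ = q₄ = 0 and q₂ = q₅ + kπ for some integer k, in which case rank A(q) < 3. (Rank claim of Example 4.) -/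
/-!
The rows `(1, 1, 1)`, `(-cos φ, cos (φ + π/3), cos (φ - π/3))` and
`(sin φ, sin (φ - 2π/3), sin (φ + 2π/3))` are pairwise orthogonal with squared lengths
`3, 3/2, 3/2`, so the 3×3 block of a segment has determinant `(3√3/2) d² κ`. Hence the rank is
full unless both curvatures vanish. Then only the two bending rows and `(1, 1, 1)` survive; the
minor they span is `(3√3/2) d² sin (q 1 - q 4)`, and when it vanishes the curvature direction of
the first segment is orthogonal to every row, giving a nonzero kernel vector.
-/

open Matrix Real

/-- The 6×3 tendon actuation matrix of the two-segment piecewise-constant-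
curvature soft robot (Example 4), `q = (κ₁, φ₁, δL₁, κ₂, φ₂, δL₂)`. -/
noncomputable def pccActuation (d : ℝ) (q : Fin 6 → ℝ) : Matrix (Fin 6) (Fin 3) ℝ :=
  Matrix.of
    ![![-d * cos (q 1),
        d * (1 / 2 * cos (q 1) - Real.sqrt 3 / 2 * sin (q 1)),
        d * (1 / 2 * cos (q 1) + Real.sqrt 3 / 2 * sin (q 1))],
      ![d * q 0 * sin (q 1),
        -(d * q 0) * (1 / 2 * sin (q 1) + Real.sqrt 3 / 2 * cos (q 1)),
        -(d * q 0) * (1 / 2 * sin (q 1) - Real.sqrt 3 / 2 * cos (q 1))],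
      ![1, 1, 1],
      ![-d * cos (q 4),
        d * (1 / 2 * cos (q 4) - Real.sqrt 3 / 2 * sin (q 4)),
        d * (1 / 2 * cos (q 4) + Real.sqrt 3 / 2 * sin (q 4))],
      ![d * q 3 * sin (q 4),
        -(d * q 3) * (1 / 2 * sin (q 4) + Real.sqrt 3 / 2 * cos (q 4)),
        -(d * q 3) * (1 / 2 * sin (q 4) - Real.sqrt 3 / 2 * cos (q 4))],
      ![1, 1, 1]]

namespace Matrix

variable {K m n : Type*} [Field K] [Fintype n]

theorem rank_eq_card_width_of_det_submatrix_ne_zero [DecidableEq n] (A : Matrix m n K)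
    (r : n → m) (h : (A.submatrix r id).det ≠ 0) : A.rank = Fintype.card n :=
  A.rank_le_card_width.antisymm <| (rank_of_det_ne_zero h).symm.le.trans (A.rank_submatrix_le r id)

theorem rank_lt_card_width_of_mulVec_eq_zero [Fintype m] (A : Matrix m n K) {u : n → K}
    (hu : u ≠ 0) (hAu : A *ᵥ u = 0) : A.rank < Fintype.card n := by
  have hker : 0 < Module.finrank K (LinearMap.ker A.mulVecLin) :=
    Module.finrank_pos_iff_exists_ne_zero.mpr
      ⟨⟨u, hAu⟩, by simpa [Subtype.ext_iff] using hu⟩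
  have := A.mulVecLin.finrank_range_add_finrank_ker
  rw [Module.finrank_fintype_fun_eq_card] at this
  rw [rank]
  omega

end Matrix

theorem Real.sin_sub_eq_zero_iff {x y : ℝ} : sin (x - y) = 0 ↔ ∃ k : ℤ, x = y + k * π :=
  Real.sin_eq_zero_iff.trans <| exists_congr fun k => by constructor <;> intro h <;> linarith

section

variable (d : ℝ) (q : Fin 6 → ℝ)

theorem det_pccActuation_submatrix_first_segment :
    ((pccActuation d q).submatrix ![0, 1, 2] id).det = 3 * √3 / 2 * d ^ 2 * q 0 := by
  rw [det_fin_three]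
  simp only [pccActuation, submatrix_apply, of_apply, id_eq, cons_val', cons_val_zero, cons_val_one,
    cons_val, cons_val_fin_one]
  linear_combination (3 * √3 / 2 * d ^ 2 * q 0) * sin_sq_add_cos_sq (q 1)

theorem det_pccActuation_submatrix_second_segment :
    ((pccActuation d q).submatrix ![3, 4, 5] id).det = 3 * √3 / 2 * d ^ 2 * q 3 := by
  rw [det_fin_three]
  simp only [pccActuation, submatrix_apply, of_apply, id_eq, cons_val', cons_val_zero, cons_val_one,
    cons_val, cons_val_fin_one]
  linear_combination (3 * √3 / 2 * d ^ 2 * q 3) * sin_sq_add_cos_sq (q 4)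

theorem det_pccActuation_submatrix_bending :
    ((pccActuation d q).submatrix ![3, 0, 2] id).det = 3 * √3 / 2 * d ^ 2 * sin (q 1 - q 4) := by
  rw [det_fin_three]
  simp only [pccActuation, submatrix_apply, of_apply, id_eq, cons_val', cons_val_zero, cons_val_one,
    cons_val, cons_val_fin_one]
  linear_combination (-(3 * √3 / 2 * d ^ 2)) * sin_sub (q 1) (q 4)

end

noncomputable def curvatureDirection (φ : ℝ) : Fin 3 → ℝ :=
  ![sin φ, -(1 / 2 * sin φ + √3 / 2 * cos φ), -(1 / 2 * sin φ - √3 / 2 * cos φ)]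

theorem curvatureDirection_ne_zero (φ : ℝ) : curvatureDirection φ ≠ 0 := by
  intro h
  have hs : sin φ = 0 := congrFun h 0
  have hc : cos φ = 0 := by simpa [curvatureDirection, hs] using congrFun h 1
  simpa [hs, hc] using sin_sq_add_cos_sq φ

theorem pccActuation_mulVec_curvatureDirection {d : ℝ} {q : Fin 6 → ℝ} (h0 : q 0 = 0)
    (h3 : q 3 = 0) (hs : sin (q 1 - q 4) = 0) :
    pccActuation d q *ᵥ curvatureDirection (q 1) = 0 := by
  have hsq : √3 ^ 2 = 3 := Real.sq_sqrt (by norm_num)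
  rw [sin_sub] at hs
  funext i
  fin_cases i <;>
    simp only [mulVec, dotProduct, Fin.sum_univ_three, pccActuation, curvatureDirection, of_apply,
      Fin.zero_eta, Fin.mk_one, Fin.reduceFinMk, cons_val', cons_val_zero, cons_val_one, cons_val,
      cons_val_fin_one, Pi.zero_apply, h0, h3]
  · linear_combination (d * cos (q 1) * sin (q 1) / 2) * hsq
  · ring
  · ring
  · linear_combination (d * sin (q 4) * cos (q 1) / 2) * hsq - (3 / 2 * d) * hs
  · ring
  · ring

theorem rank_pccActuation_lt_three {d : ℝ} {q : Fin 6 → ℝ} (h0 : q 0 = 0) (h3 : q 3 = 0)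
    (hs : sin (q 1 - q 4) = 0) : (pccActuation d q).rank < 3 :=
  rank_lt_card_width_of_mulVec_eq_zero _ (curvatureDirection_ne_zero _)
    (pccActuation_mulVec_curvatureDirection h0 h3 hs)

theorem rank_pccActuation_eq_three {d : ℝ} (hd : d ≠ 0) {q : Fin 6 → ℝ}
    (h : ¬ (q 0 = 0 ∧ q 3 = 0 ∧ sin (q 1 - q 4) = 0)) : (pccActuation d q).rank = 3 := by
  have hc : 3 * √3 / 2 * d ^ 2 ≠ 0 := by positivity
  have full (r : Fin 3 → Fin 6) (hr : ((pccActuation d q).submatrix r id).det ≠ 0) :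
      (pccActuation d q).rank = 3 :=
    rank_eq_card_width_of_det_submatrix_ne_zero _ r hr
  simp only [not_and_or] at h
  rcases h with h | h | h
  · exact full ![0, 1, 2] <| by
      rw [det_pccActuation_submatrix_first_segment]; exact mul_ne_zero hc h
  · exact full ![3, 4, 5] <| by
      rw [det_pccActuation_submatrix_second_segment]; exact mul_ne_zero hc h
  · exact full ![3, 0, 2] <| by
      rw [det_pccActuation_submatrix_bending]; exact mul_ne_zero hc h

/-- **Rank claim of Example 4.**  The 6×3 tendon actuation matrix of the
two-segment piecewise-constant-curvature soft robot has rank 3 for every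
configuration, except exactly when `q₁ = q₄ = 0` and `q₂ = q₅ + kπ` for some
integer `k`, in which case its rank drops below 3. -/
theorem pcc_soft_robot_actuation_rank
    (d : ℝ) (hd : 0 < d) :
    ∀ q : Fin 6 → ℝ,
      ((pccActuation d q).rank = 3 ↔
        ¬ (q 0 = 0 ∧ q 3 = 0 ∧ ∃ k : ℤ, q 1 = q 4 + k * Real.pi)) ∧
      ((q 0 = 0 ∧ q 3 = 0 ∧ ∃ k : ℤ, q 1 = q 4 + k * Real.pi) →
        (pccActuation d q).rank < 3) := by
  intro q
  simp only [← Real.sin_sub_eq_zero_iff]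
  have hlt : (q 0 = 0 ∧ q 3 = 0 ∧ sin (q 1 - q 4) = 0) → (pccActuation d q).rank < 3 :=
    fun ⟨h0, h3, hs⟩ => rank_pccActuation_lt_three h0 h3 hs
  exact ⟨⟨fun h hdeg => (hlt hdeg).ne h, rank_pccActuation_eq_three hd.ne'⟩, hlt⟩
end
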